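/- Let T : X → Y satisfy T(x) ∈ ∂^{c_+}φ(x) for all x ∈ X, where φ is a c-concave function with c continuous and bounded below. Then for every probability measure μ such that c(x,y) ≤ a(x) + b(y) with a ∈ L¹(μ), b ∈ L¹(T_#μ), the plan (Id,T)_#μ is an optimal transport plan between μ and T_#μ. -/
import Mathlib
open MeasureTheory

private lemma integrable_of_bounds {α : Type*} [MeasurableSpace α] {μ : Measure α}
    {f l u : α → ℝ} (hl : Integrable l μ) (hu : Integrable u μ)
    (hf : AEStronglyMeasurable f μ) (h1 : ∀ x, l x ≤ f x) (h2 : ∀ x, f x ≤ u x) :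
    Integrable f μ := by
  refine (hl.abs.add hu.abs).mono' hf (Filter.Eventually.of_forall fun x => ?_)
  simp only [Real.norm_eq_abs]
  have := neg_abs_le (l x)
  have := le_abs_self (u x)
  have := abs_nonneg (l x)
  have := abs_nonneg (u x)
  rw [abs_le]; simp only [Pi.add_apply]
  constructor <;> linarith [h1 x, h2 x]

private lemma ereal_add_eq_real {p q : EReal} {r : ℝ} (h : p + q = (r : ℝ)) :
    ∃ u v : ℝ, p = (u : EReal) ∧ q = (v : EReal) := by
  induction p using EReal.rec with
  | bot => simp at h
  | coe u =>
    induction q using EReal.rec with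
    | bot => simp at h
    | coe v => exact ⟨u, v, rfl, rfl⟩
    | top => simp at h
  | top =>
    induction q using EReal.rec with
    | bot => simp at h
    | coe v => simp at h
    | top => simp at h

theorem superdiff_selection_gives_optimal_map
    {X Y : Type*}
    [MeasurableSpace X] [TopologicalSpace X] [PolishSpace X] [BorelSpace X]
    [MeasurableSpace Y] [TopologicalSpace Y] [PolishSpace Y] [BorelSpace Y]
    (c : X × Y → ℝ) (hc : Continuous c) (m : ℝ) (hm : ∀ p, m ≤ c p)
    (φ : X → EReal) (ψ : Y → EReal)
    (hconc : ∀ x, φ x = ⨅ y : Y, (c (x, y) : EReal) - ψ y)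
    (T : X → Y) (hT : Measurable T)
    (hsuper : ∀ x, φ x + (⨅ x' : X, (c (x', T x) : EReal) - φ x') = (c (x, T x) : EReal))
    (μ : Measure X) [IsProbabilityMeasure μ]
    (a : X → ℝ) (b : Y → ℝ)
    (hab : ∀ p : X × Y, c p ≤ a p.1 + b p.2)
    (ha : Integrable a μ) (hb : Integrable b (μ.map T)) :
    ∀ γ' : Measure (X × Y),
      γ'.map Prod.fst = μ → γ'.map Prod.snd = μ.map T →
      ∫ p, c p ∂(μ.map fun x => (x, T x)) ≤ ∫ p, c p ∂γ' := by
  -- X is nonempty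
  have hXne : Nonempty X := by
    by_contra h
    rw [not_nonempty_iff] at h
    have h1 : μ Set.univ = 1 := measure_univ
    rw [Set.univ_eq_empty_iff.mpr h, measure_empty] at h1
    exact zero_ne_one h1
  obtain ⟨x₀⟩ := hXne
  set χ : Y → EReal := fun y => ⨅ x' : X, (c (x', y) : EReal) - φ x' with hχdef
  set f : X → ℝ := fun x => (φ x).toReal with hfdef
  set g : Y → ℝ := fun y => (χ y).toReal with hgdef
  -- finiteness
  have key : ∀ x, φ x = (f x : EReal) ∧ χ (T x) = (g (T x) : EReal) := by
    intro x
    obtain ⟨u, v, hu, hv⟩ := ereal_add_eq_real (hsuper x)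
    constructor
    · rw [hfdef]; simp only [hu, EReal.toReal_coe]
    · rw [hgdef]; simp only [hχdef] at hv ⊢; simp only [hv, EReal.toReal_coe]
  have hφf : ∀ x, φ x = (f x : EReal) := fun x => (key x).1
  have hχT : ∀ x, χ (T x) = (g (T x) : EReal) := fun x => (key x).2
  have hfg : ∀ x, f x + g (T x) = c (x, T x) := by
    intro x
    have h : φ x + χ (T x) = (c (x, T x) : EReal) := hsuper x
    rw [hφf x, hχT x, ← EReal.coe_add] at h
    exact_mod_cast h
  -- basic inequality for χ
  have hχ_le : ∀ x y, χ y ≤ ((c (x, y) - f x : ℝ) : EReal) := by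
    intro x y
    have : χ y ≤ (c (x, y) : EReal) - φ x := iInf_le _ x
    rwa [hφf x, ← EReal.coe_sub] at this
  have hχ_ne_top : ∀ y, χ y ≠ ⊤ := fun y =>
    ne_top_of_le_ne_top (EReal.coe_ne_top _) (hχ_le x₀ y)
  have hineq : ∀ x y, χ y ≠ ⊥ → f x + g y ≤ c (x, y) := by
    intro x y hy
    have h1 : ((g y : ℝ) : EReal) ≤ ((c (x, y) - f x : ℝ) : EReal) := by
      rw [hgdef]; rw [EReal.coe_toReal (hχ_ne_top y) hy]; exact hχ_le x y
    have := EReal.coe_le_coe_iff.mp h1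
    linarith
  -- measurability
  have hχ_meas : Measurable χ := by
    have husc : UpperSemicontinuous χ := by
      refine upperSemicontinuous_iInf fun x' => ?_
      have : (fun y => (c (x', y) : EReal) - φ x') =
          fun y => ((c (x', y) - f x' : ℝ) : EReal) := by
        funext y; rw [hφf x', ← EReal.coe_sub]
      rw [this]
      exact (continuous_coe_real_ereal.comp
        ((hc.comp (Continuous.prodMk_right x')).sub continuous_const)).upperSemicontinuous
    exact husc.measurable
  have hg_meas : Measurable g := hχ_meas.ereal_toReal
  have hf_meas : Measurable f := by
    have : f = fun x => c (x, T x) - g (T x) := funext fun x => by linarith [hfg x]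
    rw [this]
    exact (hc.measurable.comp (measurable_id.prodMk hT)).sub (hg_meas.comp hT)
  -- bounds
  have hf_le : ∀ x, f x ≤ a x + b (T x₀) - g (T x₀) := by
    intro x
    have := hineq x (T x₀) (by rw [hχT x₀]; exact EReal.coe_ne_bot _)
    have := hab (x, T x₀)
    linarith
  have hgT_le : ∀ x, g (T x) ≤ a x₀ + b (T x) - f x₀ := by
    intro x
    have := hineq x₀ (T x) (by rw [hχT x]; exact EReal.coe_ne_bot _)
    have := hab (x₀, T x)
    linarith
  have hf_ge : ∀ x, m - (a x₀ + b (T x) - f x₀) ≤ f x := by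
    intro x
    have h1 := hfg x
    have h2 := hm (x, T x)
    have := hgT_le x
    linarith
  have hgT_ge : ∀ x, m - (a x + b (T x₀) - g (T x₀)) ≤ g (T x) := by
    intro x
    have h1 := hfg x
    have h2 := hm (x, T x)
    have := hf_le x
    linarith
  -- integrability
  have hbT : Integrable (fun x => b (T x)) μ :=
    (integrable_map_measure hb.aestronglyMeasurable hT.aemeasurable).mp hb
  have hfInt : Integrable f μ := by
    refine integrable_of_bounds (l := fun x => m - (a x₀ + b (T x) - f x₀))
      (u := fun x => a x + b (T x₀) - g (T x₀)) ?_ ?_ hf_meas.aestronglyMeasurable hf_ge hf_le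
    · exact (integrable_const _).sub ((integrable_const _).add hbT |>.sub (integrable_const _))
    · exact (ha.add (integrable_const _)).sub (integrable_const _)
  have hgTInt : Integrable (fun x => g (T x)) μ := by
    refine integrable_of_bounds (l := fun x => m - (a x + b (T x₀) - g (T x₀)))
      (u := fun x => a x₀ + b (T x) - f x₀) ?_ ?_
      ((hg_meas.comp hT).aestronglyMeasurable) hgT_ge hgT_le
    · exact (integrable_const _).sub ((ha.add (integrable_const _)).sub (integrable_const _))
    · exact ((integrable_const _).add hbT).sub (integrable_const _)
  have hgInt : Integrable g (μ.map T) :=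
    (integrable_map_measure hg_meas.aestronglyMeasurable hT.aemeasurable).mpr hgTInt
  -- main argument
  intro γ' h1 h2
  haveI : IsProbabilityMeasure γ' := by
    constructor
    have h3 : (γ'.map Prod.fst) Set.univ = μ Set.univ := by rw [h1]
    rw [Measure.map_apply measurable_fst MeasurableSet.univ, Set.preimage_univ] at h3
    rw [h3, measure_univ]
  -- integrability wrt γ'
  have hfst : Integrable (fun p : X × Y => f p.1) γ' := by
    have := (integrable_map_measure hf_meas.aestronglyMeasurable
      measurable_fst.aemeasurable (μ := γ')).mp (by rw [h1]; exact hfInt)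
    exact this
  have hsnd : Integrable (fun p : X × Y => g p.2) γ' := by
    have := (integrable_map_measure hg_meas.aestronglyMeasurable
      measurable_snd.aemeasurable (μ := γ')).mp (by rw [h2]; exact hgInt)
    exact this
  have hafst : Integrable (fun p : X × Y => a p.1) γ' := by
    have := (integrable_map_measure (by rw [h1]; exact ha.aestronglyMeasurable)
      measurable_fst.aemeasurable (μ := γ')).mp (by rw [h1]; exact ha)
    exact this
  have hbsnd : Integrable (fun p : X × Y => b p.2) γ' := by
    have := (integrable_map_measure (by rw [h2]; exact hb.aestronglyMeasurable)
      measurable_snd.aemeasurable (μ := γ')).mp (by rw [h2]; exact hb)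
    exact this
  have hcγ : Integrable c γ' := by
    refine integrable_of_bounds (l := fun _ => m) (u := fun p => a p.1 + b p.2)
      (integrable_const _) (hafst.add hbsnd) hc.measurable.aestronglyMeasurable
      (fun p => hm p) (fun p => hab p)
  -- a.e. inequality wrt γ'
  have hNmeas : MeasurableSet {y | χ y = ⊥} := hχ_meas (measurableSet_singleton ⊥)
  have hae : ∀ᵐ p ∂γ', χ p.2 ≠ ⊥ := by
    rw [ae_iff]
    simp only [not_not]
    have heq : {p : X × Y | χ p.2 = ⊥} = Prod.snd ⁻¹' {y | χ y = ⊥} := rfl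
    rw [heq, ← Measure.map_apply measurable_snd hNmeas, h2,
      Measure.map_apply hT hNmeas]
    convert measure_empty
    · ext x
      simp only [Set.mem_preimage, Set.mem_setOf_eq, Set.mem_empty_iff_false, iff_false]
      rw [hχT x]; exact EReal.coe_ne_bot _
    · infer_instance
  have haemono : ∀ᵐ p ∂γ', f p.1 + g p.2 ≤ c p :=
    hae.mono fun p hp => hineq p.1 p.2 hp
  -- compute both sides
  have hmapm : Measurable (fun x => (x, T x)) := measurable_id.prodMk hT
  have hlhs : ∫ p, c p ∂(μ.map fun x => (x, T x)) = ∫ x, f x ∂μ + ∫ x, g (T x) ∂μ := by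
    rw [integral_map hmapm.aemeasurable hc.measurable.aestronglyMeasurable]
    rw [← integral_add hfInt hgTInt]
    exact integral_congr_ae (Filter.Eventually.of_forall fun x => (hfg x).symm)
  have e2 : ∫ p, f p.1 ∂γ' = ∫ x, f x ∂μ := by
    rw [← h1, integral_map measurable_fst.aemeasurable hf_meas.aestronglyMeasurable]
  have e3 : ∫ p, g p.2 ∂γ' = ∫ x, g (T x) ∂μ := by
    have e := integral_map (μ := γ') measurable_snd.aemeasurable
      (hg_meas.aestronglyMeasurable (μ := γ'.map Prod.snd))
    rw [← e, h2, integral_map hT.aemeasurable hg_meas.aestronglyMeasurable]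
  have hsum : ∫ p, (f p.1 + g p.2) ∂γ' ≤ ∫ p, c p ∂γ' :=
    integral_mono_ae (hfst.add hsnd) hcγ haemono
  rw [integral_add hfst hsnd, e2, e3] at hsum
  rw [hlhs]
  exact hsum
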